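/- arXiv:2306.02297 — 3 statements merged into one kernel-verified Lean document; each statement's English description precedes it below -/
import Mathlib

section
/- Let A be a linear map on a finite-dimensional real vector space E with all eigenvalues of modulus strictly less than 1 (i.e., A is a contraction in spectral radius). Then for every positive integer n, det(I - Aⁿ) > 0. -/
/-!
Over `ℂ` the eigenvalues of `Aⁿ` are the `n`-th powers of those of `A`, so every real root of
the characteristic polynomial of `Aⁿ` has absolute value `< 1`. Since that polynomial is monic,
it is positive to the right of its largest real root, in particular at `1`, where it equals
`det (I - Aⁿ)`.
-/

open Polynomial

theorem LinearMap.isRoot_charpoly_pow_map_iff {K L V : Type*} [Field K] [Field L] [IsAlgClosed L]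
    [Algebra K L] [AddCommGroup V] [Module K V] [FiniteDimensional K V] (f : V →ₗ[K] V)
    {n : ℕ} (hn : 0 < n) (z : L) :
    ((f ^ n).charpoly.map (algebraMap K L)).IsRoot z ↔
      ∃ w, (f.charpoly.map (algebraMap K L)).IsRoot w ∧ w ^ n = z := by
  simp only [← LinearMap.charpoly_baseChange, LinearMap.baseChange_pow,
    ← Module.End.mem_spectrum_iff_isRoot_charpoly, spectrum.map_pow_of_pos _ hn, Set.mem_image]

theorem LinearMap.det_one_sub_pos_of_roots_lt_one {V : Type*} [AddCommGroup V] [Module ℝ V]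
    [FiniteDimensional ℝ V] (f : V →ₗ[ℝ] V) (h : ∀ x : ℝ, f.charpoly.IsRoot x → x < 1) :
    0 < LinearMap.det (1 - f) := by
  have := zero_lt_eval_of_roots_lt_of_leadingCoeff_nonneg h
    (by rw [f.charpoly_monic.leadingCoeff]; exact zero_le_one)
  rwa [LinearMap.eval_charpoly, map_one] at this

/-- If `A` is a linear map on a finite-dimensional real vector space all of whose
(complex) eigenvalues have modulus strictly less than 1, then `det (I - Aⁿ) > 0`
for every positive integer `n`. -/
theorem stmt_0 (E : Type*) [AddCommGroup E] [Module ℝ E] [FiniteDimensional ℝ E]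
    (A : E →ₗ[ℝ] E)
    (hA : ∀ z : ℂ, ((LinearMap.charpoly A).map (algebraMap ℝ ℂ)).IsRoot z → ‖z‖ < 1)
    (n : ℕ) (hn : 1 ≤ n) :
    0 < LinearMap.det ((LinearMap.id : E →ₗ[ℝ] E) - A ^ n) := by
  refine (A ^ n).det_one_sub_pos_of_roots_lt_one fun x hx ↦ ?_
  obtain ⟨w, hw, hwx⟩ :=
    (A.isRoot_charpoly_pow_map_iff hn (x : ℂ)).1 (hx.map (f := algebraMap ℝ ℂ))
  calc x ≤ |x| := le_abs_self x
    _ = ‖w‖ ^ n := by rw [← norm_pow, hwx, Complex.norm_real, Real.norm_eq_abs]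
    _ < 1 := pow_lt_one₀ (norm_nonneg w) (hA w hw) (by omega)
end

section
/- Let P be an invertible linear map on a d-dimensional real vector space whose eigenvalues all have modulus strictly greater than 1, and suppose det(P) > 0. Then for every positive integer n, (-1)^d · det(I - Pⁿ) > 0. -/
/-!
Let `p` be the characteristic polynomial of `Pⁿ` and `d = dim E`. Then `(-1)^d p(0) = det Pⁿ > 0`
and `(-1)^d p(1) = det (I - Pⁿ)`. Every complex root of `p` is `wⁿ` for an eigenvalue `w` of `P`,
so has modulus `> 1`; hence `p` has no root in `[0, 1]` and, by the intermediate value theorem,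
`(-1)^d p` has the same sign at `1` as at `0`.
-/

open Polynomial Set

theorem ContinuousOn.pos_of_pos_of_forall_ne_zero {α δ : Type*}
    [ConditionallyCompleteLinearOrder α] [TopologicalSpace α] [OrderTopology α] [DenselyOrdered α]
    [LinearOrder δ] [TopologicalSpace δ] [OrderClosedTopology δ] [Zero δ]
    {f : α → δ} {a b : α} (hab : a ≤ b) (hf : ContinuousOn f (Icc a b))
    (hne : ∀ t ∈ Icc a b, f t ≠ 0) (ha : 0 < f a) : 0 < f b := by
  by_contra! hb
  obtain ⟨t, ht, hft⟩ := intermediate_value_Icc' hab hf ⟨hb, ha.le⟩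
  exact hne t ht hft

theorem LinearMap.exists_isRoot_charpoly_pow_eq_of_isRoot_charpoly_pow
    {K L V : Type*} [Field K] [Field L] [Algebra K L] [IsAlgClosed L]
    [AddCommGroup V] [Module K V] [FiniteDimensional K V]
    (f : V →ₗ[K] V) {n : ℕ} (hn : 0 < n) {z : L}
    (hz : ((f ^ n).charpoly.map (algebraMap K L)).IsRoot z) :
    ∃ w : L, (f.charpoly.map (algebraMap K L)).IsRoot w ∧ w ^ n = z := by
  rw [← LinearMap.charpoly_baseChange, ← Module.End.mem_spectrum_iff_isRoot_charpoly,
    LinearMap.baseChange_pow, spectrum.map_pow_of_pos _ hn] at hz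
  obtain ⟨w, hw, rfl⟩ := hz
  exact ⟨w, by rwa [← LinearMap.charpoly_baseChange,
    ← Module.End.mem_spectrum_iff_isRoot_charpoly], rfl⟩

theorem stmt_1_general (E : Type*) [AddCommGroup E] [Module ℝ E] [FiniteDimensional ℝ E]
    (P : E →ₗ[ℝ] E)
    (hP : ∀ z : ℂ, ((LinearMap.charpoly P).map (algebraMap ℝ ℂ)).IsRoot z → 1 < ‖z‖)
    (hdet : 0 < LinearMap.det P)
    (n : ℕ) (hn : 1 ≤ n) :
    0 < (-1 : ℝ) ^ (Module.finrank ℝ E) *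
      LinearMap.det ((LinearMap.id : E →ₗ[ℝ] E) - P ^ n) := by
  set p := (P ^ n).charpoly
  have hroots : ∀ t ∈ Icc (0 : ℝ) 1, ¬ p.IsRoot t := by
    intro t ht hpt
    have hroot_ℂ : (p.map (algebraMap ℝ ℂ)).IsRoot (t : ℂ) := by
      simpa using hpt.map (f := algebraMap ℝ ℂ)
    obtain ⟨w, hw, hwt⟩ := P.exists_isRoot_charpoly_pow_eq_of_isRoot_charpoly_pow hn hroot_ℂ
    have hone_lt : 1 < |t| := by
      rw [← Real.norm_eq_abs, ← Complex.norm_real, ← hwt, norm_pow]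
      exact one_lt_pow₀ (hP w hw) (by omega)
    rw [abs_of_nonneg ht.1] at hone_lt
    exact hone_lt.not_ge ht.2
  have heval_zero : (-1 : ℝ) ^ Module.finrank ℝ E * p.eval 0 = LinearMap.det (P ^ n) := by
    rw [LinearMap.det_eq_sign_charpoly_coeff, coeff_zero_eq_eval_zero]
  have heval_one : p.eval 1 = LinearMap.det ((LinearMap.id : E →ₗ[ℝ] E) - P ^ n) := by
    rw [LinearMap.eval_charpoly, map_one, Module.End.one_eq_id]
  rw [← heval_one]
  refine ContinuousOn.pos_of_pos_of_forall_ne_zero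
    (f := fun t => (-1 : ℝ) ^ Module.finrank ℝ E * p.eval t) zero_le_one
    (by fun_prop) (fun t ht => ?_) ?_
  · exact mul_ne_zero (pow_ne_zero _ (by norm_num)) (hroots t ht)
  · rw [heval_zero, map_pow]
    exact pow_pos hdet n

/-- If `P` is an invertible linear map on a `d`-dimensional real vector space all of whose
(complex) eigenvalues have modulus strictly greater than 1, and `det P > 0`, then
`(-1)^d · det (I - Pⁿ) > 0` for every positive integer `n`. -/
theorem stmt_1 (E : Type*) [AddCommGroup E] [Module ℝ E] [FiniteDimensional ℝ E]
    (P : E →ₗ[ℝ] E) (hinv : Function.Bijective P)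
    (hP : ∀ z : ℂ, ((LinearMap.charpoly P).map (algebraMap ℝ ℂ)).IsRoot z → 1 < ‖z‖)
    (hdet : 0 < LinearMap.det P)
    (n : ℕ) (hn : 1 ≤ n) :
    0 < (-1 : ℝ) ^ (Module.finrank ℝ E) *
      LinearMap.det ((LinearMap.id : E →ₗ[ℝ] E) - P ^ n) :=
  stmt_1_general E P hP hdet n hn
end

section
/- Let P be an invertible linear map on a d-dimensional real vector space whose eigenvalues all have modulus strictly greater than 1, and suppose det(P) < 0. Then for every positive integer n, (-1)^{d+n} · det(I - Pⁿ) > 0. -/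
/-! The real polynomial `s ↦ (-1)^(d+n) det(s - Pⁿ)` has no zero on `[0, 1]`: every complex
eigenvalue of `Pⁿ` is the `n`-th power of an eigenvalue of `P`, hence of modulus `> 1`. At `s = 0`
it equals `(-det P)ⁿ > 0`, so by the intermediate value theorem it is positive at `s = 1` too. -/

open Polynomial

theorem IsPreconnected.pos_of_pos_of_forall_ne_zero {X α : Type*} [TopologicalSpace X]
    [LinearOrder α] [TopologicalSpace α] [OrderClosedTopology α] [Zero α] {s : Set X}
    (hs : IsPreconnected s) {f : X → α} (hf : ContinuousOn f s) (hf0 : ∀ x ∈ s, f x ≠ 0)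
    {a b : X} (ha : a ∈ s) (hb : b ∈ s) (hfa : 0 < f a) : 0 < f b := by
  by_contra! hfb
  obtain ⟨x, hx, hfx⟩ := hs.intermediate_value hb ha hf ⟨hfb, hfa.le⟩
  exact hf0 x hx hfx

theorem spectrum.one_lt_norm_of_mem_pow {𝕜 A : Type*} [NormedField 𝕜] [IsAlgClosed 𝕜] [Ring A]
    [Algebra 𝕜 A] {a : A} (ha : ∀ z ∈ spectrum 𝕜 a, 1 < ‖z‖) {n : ℕ} (hn : n ≠ 0) {z : 𝕜}
    (hz : z ∈ spectrum 𝕜 (a ^ n)) : 1 < ‖z‖ := by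
  rw [spectrum.map_pow_of_pos a (Nat.pos_of_ne_zero hn)] at hz
  obtain ⟨w, hw, rfl⟩ := hz
  rw [norm_pow]
  exact one_lt_pow₀ (ha w hw) hn

theorem LinearMap.eval_zero_charpoly {R M : Type*} [CommRing R] [AddCommGroup M] [Module R M]
    [Module.Free R M] [Module.Finite R M] (f : M →ₗ[R] M) :
    f.charpoly.eval 0 = (-1) ^ Module.finrank R M * LinearMap.det f := by
  rw [det_eq_sign_charpoly_coeff, ← mul_assoc, ← pow_add, ← two_mul, pow_mul, neg_one_sq, one_pow,
    one_mul, coeff_zero_eq_eval_zero]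

theorem LinearMap.one_lt_abs_of_isRoot_charpoly_pow {E : Type*} [AddCommGroup E] [Module ℝ E]
    [FiniteDimensional ℝ E] {P : E →ₗ[ℝ] E}
    (hP : ∀ z : ℂ, (P.charpoly.map (algebraMap ℝ ℂ)).IsRoot z → 1 < ‖z‖) {n : ℕ} (hn : n ≠ 0)
    {s : ℝ} (hs : (P ^ n).charpoly.IsRoot s) : 1 < |s| := by
  have hPℂ : ∀ z ∈ spectrum ℂ (P.baseChange ℂ), 1 < ‖z‖ := fun z hz ↦ by
    rw [Module.End.mem_spectrum_iff_isRoot_charpoly, charpoly_baseChange] at hz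
    exact hP z hz
  have hsℂ : (s : ℂ) ∈ spectrum ℂ (P.baseChange ℂ ^ n) := by
    rw [← baseChange_pow, Module.End.mem_spectrum_iff_isRoot_charpoly, charpoly_baseChange]
    simpa using hs.map (f := algebraMap ℝ ℂ)
  simpa using spectrum.one_lt_norm_of_mem_pow hPℂ hn hsℂ

theorem stmt_2_general (E : Type*) [AddCommGroup E] [Module ℝ E] [FiniteDimensional ℝ E]
    (P : E →ₗ[ℝ] E)
    (hP : ∀ z : ℂ, ((LinearMap.charpoly P).map (algebraMap ℝ ℂ)).IsRoot z → 1 < ‖z‖)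
    (hdet : LinearMap.det P < 0)
    (n : ℕ) (hn : 1 ≤ n) :
    0 < (-1 : ℝ) ^ (Module.finrank ℝ E + n) *
      LinearMap.det ((LinearMap.id : E →ₗ[ℝ] E) - P ^ n) := by
  set g : ℝ → ℝ := fun s ↦ (-1) ^ (Module.finrank ℝ E + n) * (P ^ n).charpoly.eval s
  have hg0 : g 0 = (-LinearMap.det P) ^ n :=
    calc g 0 = (-1) ^ (Module.finrank ℝ E + n) *
            ((-1) ^ Module.finrank ℝ E * LinearMap.det P ^ n) := by
          simp only [g, LinearMap.eval_zero_charpoly, map_pow]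
      _ = ((-1) ^ Module.finrank ℝ E) ^ 2 * (-LinearMap.det P) ^ n := by
          rw [neg_pow, pow_add]; ring
      _ = (-LinearMap.det P) ^ n := by rw [← pow_mul, pow_mul', neg_one_sq, one_pow, one_mul]
  have hg_ne : ∀ s ∈ Set.Icc (0 : ℝ) 1, g s ≠ 0 := by
    rintro s ⟨hs0, hs1⟩
    refine mul_ne_zero (by simp) fun hroot ↦ ?_
    have := LinearMap.one_lt_abs_of_isRoot_charpoly_pow hP (by omega) hroot
    rw [abs_of_nonneg hs0] at this
    linarith
  have hg1 : 0 < g 1 := isPreconnected_Icc.pos_of_pos_of_forall_ne_zero (by fun_prop) hg_ne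
    (Set.left_mem_Icc.2 zero_le_one) (Set.right_mem_Icc.2 zero_le_one)
    (hg0 ▸ pow_pos (neg_pos.2 hdet) n)
  simpa [g, LinearMap.eval_charpoly, ← Module.End.one_eq_id] using hg1

/-- If `P` is an invertible linear map on a `d`-dimensional real vector space all of whose
(complex) eigenvalues have modulus strictly greater than 1, and `det P < 0`, then
`(-1)^(d+n) · det (I - Pⁿ) > 0` for every positive integer `n`. -/
theorem stmt_2 (E : Type*) [AddCommGroup E] [Module ℝ E] [FiniteDimensional ℝ E]
    (P : E →ₗ[ℝ] E) (hinv : Function.Bijective P)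
    (hP : ∀ z : ℂ, ((LinearMap.charpoly P).map (algebraMap ℝ ℂ)).IsRoot z → 1 < ‖z‖)
    (hdet : LinearMap.det P < 0)
    (n : ℕ) (hn : 1 ≤ n) :
    0 < (-1 : ℝ) ^ (Module.finrank ℝ E + n) *
      LinearMap.det ((LinearMap.id : E →ₗ[ℝ] E) - P ^ n) :=
  stmt_2_general E P hP hdet n hn
end
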